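/- Let (l, r, V) be a bimodule of a nearly associative algebra (A, ·). Then the bracket [x+u, y+v] = [x,y] + (l(x)−r(x))v − (l(y)−r(y))u, where [x,y] = x·y − y·x, defines a Lie algebra structure on A ⊕ V. -/

import Mathlib

/-!
The semidirect product `(x + u) ∗ (y + v) = x·y + l(x)v + r(y)u` is itself nearly associative:
comparing `X ∗ (Y ∗ Z)` with `(Z ∗ X) ∗ Y` component by component, the three bimodule axioms are
exactly the three identities needed in `V`. The bracket is the commutator of `∗`, and the
commutator of any nearly associative product satisfies the Jacobi identity, because
`x(yz) = (zx)y` turns each cyclic sum of triple products into another cyclic sum that cancels.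
-/

namespace NearlyAssociative

variable {R M : Type*} [CommRing R] [AddCommGroup M] [Module R M]

def IsNearlyAssociative (mul : M →ₗ[R] M →ₗ[R] M) : Prop :=
  ∀ x y z : M, mul x (mul y z) = mul (mul z x) y

def commutator (mul : M →ₗ[R] M →ₗ[R] M) (x y : M) : M :=
  mul x y - mul y x

theorem commutator_comm (mul : M →ₗ[R] M →ₗ[R] M) (x y : M) :
    commutator mul x y = -commutator mul y x :=
  (neg_sub _ _).symm

theorem IsNearlyAssociative.commutator_jacobi {mul : M →ₗ[R] M →ₗ[R] M}
    (h : IsNearlyAssociative mul) (x y z : M) :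
    commutator mul x (commutator mul y z) + commutator mul y (commutator mul z x) +
      commutator mul z (commutator mul x y) = 0 := by
  simp only [commutator, map_sub, LinearMap.sub_apply, h x, h y, h z]
  abel

variable {A V : Type*} [AddCommGroup A] [Module R A] [AddCommGroup V] [Module R V]

structure IsBimodule (mul : A →ₗ[R] A →ₗ[R] A) (l r : A →ₗ[R] Module.End R V) : Prop where
  left_comp_left : ∀ x y : A, l x ∘ₗ l y = r y ∘ₗ r x
  left_comp_right : ∀ x y : A, l x ∘ₗ r y = l (mul y x)
  right_comp_left : ∀ x y : A, r x ∘ₗ l y = r (mul x y)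

def semidirectMul (mul : A →ₗ[R] A →ₗ[R] A) (l r : A →ₗ[R] Module.End R V) :
    A × V →ₗ[R] A × V →ₗ[R] A × V :=
  LinearMap.mk₂ R (fun p q => (mul p.1 q.1, l p.1 q.2 + r q.1 p.2))
    (fun p p' q => by ext <;> simp [add_add_add_comm])
    (fun c p q => by ext <;> simp)
    (fun p q q' => by ext <;> simp [add_add_add_comm])
    (fun c p q => by ext <;> simp)

@[simp]
theorem semidirectMul_apply (mul : A →ₗ[R] A →ₗ[R] A) (l r : A →ₗ[R] Module.End R V)
    (p q : A × V) : semidirectMul mul l r p q = (mul p.1 q.1, l p.1 q.2 + r q.1 p.2) :=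
  rfl

theorem IsNearlyAssociative.semidirectMul {mul : A →ₗ[R] A →ₗ[R] A}
    {l r : A →ₗ[R] Module.End R V} (hmul : IsNearlyAssociative mul) (hbimod : IsBimodule mul l r) :
    IsNearlyAssociative (semidirectMul mul l r) := by
  rintro ⟨x, u⟩ ⟨y, v⟩ ⟨z, w⟩
  have hll_w := LinearMap.congr_fun (hbimod.left_comp_left x y) w
  have hlr_v := LinearMap.congr_fun (hbimod.left_comp_right x z) v
  have hrl_u := LinearMap.congr_fun (hbimod.right_comp_left y z) u
  simp only [LinearMap.comp_apply] at hll_w hlr_v hrl_u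
  ext
  · exact hmul x y z
  · simp only [semidirectMul_apply, map_add, hll_w, hlr_v, hrl_u]
    abel

theorem commutator_semidirectMul (mul : A →ₗ[R] A →ₗ[R] A) (l r : A →ₗ[R] Module.End R V)
    (p q : A × V) :
    commutator (semidirectMul mul l r) p q =
      (mul p.1 q.1 - mul q.1 p.1, (l p.1 - r p.1) q.2 - (l q.1 - r q.1) p.2) := by
  ext
  · rfl
  · simp only [commutator, semidirectMul_apply, Prod.snd_sub, LinearMap.sub_apply]
    abel

end NearlyAssociative

open NearlyAssociative in
/-- The commutator of the semidirect product of a nearly associative algebra with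
a bimodule defines a Lie algebra structure on A ⊕ V. -/
theorem bimodule_semidirect_lie_structure
    {K A V : Type*} [Field K] [AddCommGroup A] [Module K A]
    [AddCommGroup V] [Module K V]
    (mul : A →ₗ[K] A →ₗ[K] A)
    (hna : ∀ x y z : A, mul x (mul y z) = mul (mul z x) y)
    (l r : A →ₗ[K] Module.End K V)
    (hb1 : ∀ x y : A, l x ∘ₗ l y = r y ∘ₗ r x)
    (hb2 : ∀ x y : A, l x ∘ₗ r y = l (mul y x))
    (hb3 : ∀ x y : A, r x ∘ₗ l y = r (mul x y)) :
    let bracket : A × V → A × V → A × V := fun p q =>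
      (mul p.1 q.1 - mul q.1 p.1,
       (l p.1 - r p.1) q.2 - (l q.1 - r q.1) p.2)
    (∀ X Y : A × V, bracket X Y = -bracket Y X) ∧
    (∀ X Y Z : A × V,
      bracket X (bracket Y Z) + bracket Y (bracket Z X) + bracket Z (bracket X Y) = 0) := by
  intro bracket
  have hbracket : bracket = commutator (semidirectMul mul l r) :=
    funext₂ fun p q => (commutator_semidirectMul mul l r p q).symm
  have hsemidirect : IsNearlyAssociative (semidirectMul mul l r) :=
    IsNearlyAssociative.semidirectMul hna ⟨hb1, hb2, hb3⟩
  rw [hbracket]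
  exact ⟨commutator_comm _, hsemidirect.commutator_jacobi⟩
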